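/- Let M ≥ 4 and N ≥ 2 be integers and ε = 1/(N²·M²). Consider the instance over colors {white, red, blue} consisting of N phases, where each phase is M white items of size ε followed by 2M items of size ε with alternating colors red, blue, red, blue, … (M red and M blue per phase). Then OPT = M for this instance, while First Fit uses M + (N−1)(M−1) = NM − N + 1 bins. Consequently, First Fit has unbounded asymptotic competitive ratio for colorful bin packing with three colors. -/
import Mathlib


/-- The three colors used in the construction. -/
inductive Color3 : Type
  | white
  | red
  | blue
deriving DecidableEq

/-- The size of the `t`-th item (1-based) of the sequence `σ` of (size, color) pairs. -/
def itemSize (σ : List (ℝ × Color3)) (t : ℕ) : ℝ := (σ.getD (t - 1) (0, Color3.white)).1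

/-- The color of the `t`-th item (1-based) of the sequence `σ`. -/
def itemColor (σ : List (ℝ × Color3)) (t : ℕ) : Color3 := (σ.getD (t - 1) (0, Color3.white)).2

/-- `f` (mapping item indices `1,…,σ.length` to bin indices) is a valid packing of `σ`:
each bin's total size is at most `1` and two items packed consecutively into the same bin
have different colors. -/
def ValidAssign (σ : List (ℝ × Color3)) (f : ℕ → ℕ) : Prop :=
  (∀ b, (∑ t ∈ (Finset.Icc 1 σ.length).filter fun t => f t = b, itemSize σ t) ≤ 1) ∧
  (∀ i j, 1 ≤ i → i < j → j ≤ σ.length → f i = f j →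
    (∀ l, i < l → l < j → f l ≠ f i) → itemColor σ i ≠ itemColor σ j)

/-- `OPTlist σ` is the minimum number of bins over all packings of `σ`. -/
noncomputable def OPTlist (σ : List (ℝ × Color3)) : ℕ :=
  sInf {L | ∃ f : ℕ → ℕ, (∀ t, 1 ≤ t → t ≤ σ.length → 1 ≤ f t ∧ f t ≤ L) ∧ ValidAssign σ f}

/-- One step of First Fit: the current bins are listed (in the order they were opened) as
(load, color-of-last-item) pairs; the new item goes into the first bin where it fits and whose
last item has a different color, and a new bin is opened if there is no such bin. -/
noncomputable def ffStep (bins : List (ℝ × Color3)) (item : ℝ × Color3) :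
    List (ℝ × Color3) :=
  match bins.findIdx? (fun b => decide (b.1 + item.1 ≤ 1 ∧ b.2 ≠ item.2)) with
  | some i => bins.set i ((bins.getD i (0, item.2)).1 + item.1, item.2)
  | none => bins ++ [item]

/-- The bins produced by First Fit on the input sequence `σ`. -/
noncomputable def ffRun (σ : List (ℝ × Color3)) : List (ℝ × Color3) :=
  σ.foldl ffStep []

/-- The instance of Proposition 1 for First Fit: `N` phases, each consisting of `M` white
items of size `ε` followed by `2M` items of size `ε` of alternating colors red, blue, red,
blue, … -/
def ffInstance (N M : ℕ) (ε : ℝ) : List (ℝ × Color3) :=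
  (List.replicate N
    (List.replicate M (ε, Color3.white) ++
      (List.range (2 * M)).map fun j =>
        (ε, if j % 2 = 0 then Color3.red else Color3.blue))).flatten

theorem ffStep_head {L s : ℝ} {c c' : Color3} {T : List (ℝ × Color3)}
    (h1 : L + s ≤ 1) (h2 : c ≠ c') :
    ffStep ((L, c) :: T) (s, c') = (L + s, c') :: T := by
  simp [ffStep, List.findIdx?_cons, h1, h2]

theorem ffStep_none {bins : List (ℝ × Color3)} {s : ℝ} {c : Color3}
    (h : ∀ b ∈ bins, b.2 = c) :
    ffStep bins (s, c) = bins ++ [(s, c)] := by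
  have : bins.findIdx? (fun b => decide (b.1 + s ≤ 1) && !decide (b.2 = c)) = none := by
    rw [List.findIdx?_eq_none_iff]
    intro x hx
    simp [h x hx]
  simp [ffStep, this]

def altC (j : ℕ) : Color3 := if j % 2 = 0 then Color3.red else Color3.blue

theorem altC_ne_white (j : ℕ) : altC j ≠ Color3.white := by
  unfold altC; split <;> simp

theorem altC_succ (j : ℕ) : altC j ≠ altC (j + 1) := by
  unfold altC
  rcases Nat.mod_two_eq_zero_or_one j with h | h
  · rw [if_pos h, if_neg (by omega)]; simp
  · rw [if_neg (by omega), if_pos (by omega)]; simp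

theorem white_append (k : ℕ) (ε : ℝ) :
    ∀ bins : List (ℝ × Color3), (∀ b ∈ bins, b.2 = Color3.white) →
    List.foldl ffStep bins (List.replicate k (ε, Color3.white)) =
      bins ++ List.replicate k (ε, Color3.white) := by
  induction k with
  | zero => simp
  | succ k ih =>
    intro bins h
    rw [List.replicate_succ, List.foldl_cons, ffStep_none h, ih]
    · rw [List.append_assoc]; rfl
    · intro b hb
      rcases List.mem_append.1 hb with h' | h'
      · exact h b h'
      · simp only [List.mem_singleton] at h'; rw [h']

theorem alt_run (ε : ℝ) (hε : 0 ≤ ε) :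
    ∀ (n j : ℕ) (L : ℝ) (c : Color3) (T : List (ℝ × Color3)),
    c ≠ altC j → L + (n + 1 : ℝ) * ε ≤ 1 →
    List.foldl ffStep ((L, c) :: T)
      ((List.range' j (n + 1)).map fun i => (ε, altC i)) =
      (L + (n + 1 : ℝ) * ε, altC (j + n)) :: T := by
  intro n
  induction n with
  | zero =>
    intro j L c T hc hL
    norm_num at hL ⊢
    exact ffStep_head hL hc
  | succ n ih =>
    intro j L c T hc hL
    have h0 : (0:ℝ) ≤ ((n:ℝ)+1) * ε := by positivity
    have hexp : ((n+1:ℕ):ℝ) + 1 = ((n:ℝ)+1) + 1 := by push_cast; ring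
    rw [hexp] at hL
    have hL1 : L + ε ≤ 1 := by nlinarith
    have hL2 : (L + ε) + ((n:ℝ)+1) * ε ≤ 1 := by nlinarith
    rw [List.range'_succ, List.map_cons, List.foldl_cons, ffStep_head hL1 hc]
    rw [ih (j+1) _ _ _ (altC_succ j) hL2]
    have : j + 1 + n = j + (n+1) := by omega
    rw [this]
    congr 2
    push_cast; ring

def Block (M : ℕ) (ε : ℝ) : List (ℝ × Color3) :=
  List.replicate M (ε, Color3.white) ++ (List.range (2 * M)).map fun j => (ε, altC j)

theorem ffInstance_eq (N M : ℕ) (ε : ℝ) :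
    ffInstance N M ε = (List.replicate N (Block M ε)).flatten := rfl

theorem phase_base {M : ℕ} (hM : 1 ≤ M) {ε : ℝ} (hε : 0 ≤ ε)
    (h1 : (2*(M:ℝ)+1) * ε ≤ 1) :
    List.foldl ffStep [] (Block M ε) =
      ((2*(M:ℝ)+1) * ε, Color3.blue) :: List.replicate (M-1) (ε, Color3.white) := by
  obtain ⟨m, rfl⟩ : ∃ m, M = m + 1 := ⟨M - 1, by omega⟩
  rw [Block, List.foldl_append, white_append _ _ _ (by simp)]
  rw [List.nil_append, List.replicate_succ]
  rw [List.range_eq_range']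
  have h2m : 2 * (m + 1) = (2*m+1) + 1 := by omega
  rw [h2m, alt_run ε hε (2*m+1) 0 ε Color3.white _ (by simp [altC]) ?hL]
  case hL => push_cast at h1 ⊢; nlinarith
  have hc : altC (0 + (2*m+1)) = Color3.blue := by simp [altC, Nat.add_mod]
  rw [hc]
  have : (m + 1 : ℕ) - 1 = m := by omega
  rw [this]
  congr 2
  push_cast; ring

theorem phase_step {M : ℕ} (hM : 1 ≤ M) {ε : ℝ} (hε : 0 ≤ ε) {L : ℝ} {k : ℕ}
    (h1 : L + (2*(M:ℝ)+1) * ε ≤ 1) :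
    List.foldl ffStep ((L, Color3.blue) :: List.replicate k (ε, Color3.white)) (Block M ε) =
      (L + (2*(M:ℝ)+1) * ε, Color3.blue) ::
        List.replicate (k + (M-1)) (ε, Color3.white) := by
  obtain ⟨m, rfl⟩ : ∃ m, M = m + 1 := ⟨M - 1, by omega⟩
  rw [Block, List.foldl_append]
  rw [List.replicate_succ, List.foldl_cons]
  have hL1 : L + ε ≤ 1 := by push_cast at h1; nlinarith
  rw [ffStep_head hL1 (by simp)]
  rw [white_append _ _ _ ?hw]
  case hw =>
    intro b hb
    rcases List.mem_cons.1 hb with h' | h'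
    · rw [h']
    · exact ((List.mem_replicate.1 h').2 ▸ rfl)
  rw [List.cons_append, ← List.replicate_add]
  rw [List.range_eq_range']
  have h2m : 2 * (m + 1) = (2*m+1) + 1 := by omega
  rw [h2m, alt_run ε hε (2*m+1) 0 _ Color3.white _ (by simp [altC]) ?hL]
  case hL => push_cast at h1 ⊢; nlinarith
  have hc : altC (0 + (2*m+1)) = Color3.blue := by simp [altC, Nat.add_mod]
  rw [hc]
  have : (m + 1 : ℕ) - 1 = m := by omega
  rw [this]
  congr 2
  push_cast; ring

theorem ff_phases {M : ℕ} (hM : 1 ≤ M) {ε : ℝ} (hε : 0 ≤ ε) :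
    ∀ p : ℕ, ((p:ℝ)+1) * ((2*(M:ℝ))+1) * ε ≤ 1 →
    List.foldl ffStep [] (List.replicate (p+1) (Block M ε)).flatten =
      (((p:ℝ)+1) * (2*(M:ℝ)+1) * ε, Color3.blue) ::
        List.replicate ((p+1)*(M-1)) (ε, Color3.white) := by
  intro p
  induction p with
  | zero =>
    intro h
    norm_num at h ⊢
    rw [phase_base hM hε h]
  | succ p ih =>
    intro h
    have hX : 0 ≤ (2*(M:ℝ)+1) * ε := by positivity
    have hprev : ((p:ℝ)+1) * ((2*(M:ℝ))+1) * ε ≤ 1 := by push_cast at h ⊢; nlinarith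
    rw [List.replicate_succ', List.flatten_append, List.foldl_append, ih hprev]
    simp only [List.flatten_cons, List.flatten_nil, List.append_nil]
    rw [phase_step hM hε (by push_cast at h ⊢; nlinarith)]
    have hk : (p+1)*(M-1) + (M-1) = (p+1+1)*(M-1) := by ring
    rw [hk]
    congr 2
    push_cast; ring

theorem block_length (M : ℕ) (ε : ℝ) : (Block M ε).length = 3 * M := by
  simp [Block]; omega

theorem ffInstance_length (N M : ℕ) (ε : ℝ) :
    (ffInstance N M ε).length = N * (3 * M) := by
  rw [ffInstance_eq, List.length_flatten]
  simp [block_length, List.sum_replicate, smul_eq_mul]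

theorem block_getD_lt {M r : ℕ} (hr : r < M) (ε : ℝ) (d : ℝ × Color3) :
    (Block M ε).getD r d = (ε, Color3.white) := by
  rw [Block, List.getD_append _ _ _ _ (by simpa using hr),
    List.getD_eq_getElem _ _ (by simpa using hr), List.getElem_replicate]

theorem block_getD_ge {M r : ℕ} (h1 : M ≤ r) (h2 : r < 3 * M) (ε : ℝ) (d : ℝ × Color3) :
    (Block M ε).getD r d = (ε, altC (r - M)) := by
  rw [Block, List.getD_append_right _ _ _ _ (by simpa using h1)]
  simp only [List.length_replicate]
  rw [List.getD_eq_getElem _ _ (by simp; omega), List.getElem_map, List.getElem_range]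

theorem ffInstance_getD {N M : ℕ} (ε : ℝ) :
    ∀ k, k < N * (3 * M) → ∀ d,
    (ffInstance N M ε).getD k d = (Block M ε).getD (k % (3 * M)) d := by
  rw [ffInstance_eq]
  induction N with
  | zero => intro k hk; simp at hk
  | succ n ih =>
    intro k hk d
    rw [List.replicate_succ, List.flatten_cons]
    by_cases h : k < 3 * M
    · rw [List.getD_append _ _ _ _ (by rw [block_length]; omega), Nat.mod_eq_of_lt h]
    · rw [List.getD_append_right _ _ _ _ (by rw [block_length]; omega), block_length]
      have hx : (n+1)*(3*M) = n*(3*M) + 3*M := by ring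
      have hb : k - 3*M < n*(3*M) := by omega
      rw [Nat.mod_eq_sub_mod (show 3*M ≤ k by omega)]
      exact ih (k - 3*M) hb d

theorem item_size {N M : ℕ} {ε : ℝ} {t : ℕ} (hM : 1 ≤ M) (h1 : 1 ≤ t) (h2 : t ≤ N * (3*M)) :
    itemSize (ffInstance N M ε) t = ε := by
  rw [itemSize, ffInstance_getD ε (t-1) (by omega)]
  have hr : (t-1) % (3*M) < 3*M := Nat.mod_lt _ (by omega)
  by_cases h : (t-1) % (3*M) < M
  · rw [block_getD_lt h]
  · rw [block_getD_ge (by omega) hr]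

theorem item_color {N M : ℕ} {ε : ℝ} {t : ℕ} (hM : 1 ≤ M) (h1 : 1 ≤ t) (h2 : t ≤ N * (3*M)) :
    itemColor (ffInstance N M ε) t =
      if (t-1) % (3*M) < M then Color3.white else altC ((t-1) % (3*M) - M) := by
  rw [itemColor, ffInstance_getD ε (t-1) (by omega)]
  have hr : (t-1) % (3*M) < 3*M := Nat.mod_lt _ (by omega)
  by_cases h : (t-1) % (3*M) < M
  · rw [block_getD_lt h, if_pos h]
  · rw [block_getD_ge (by omega) hr, if_neg h]

/-- the optimal assignment -/

def optF (M : ℕ) (t : ℕ) : ℕ :=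
  if (t-1) % (3*M) < M then (t-1) % (3*M) + 1 else ((t-1) % (3*M) - M) / 2 + 1

theorem altC_parity {a b : ℕ} (h : altC a = altC b) : a % 2 = b % 2 := by
  unfold altC at h
  rcases Nat.mod_two_eq_zero_or_one a with h1 | h1 <;>
    rcases Nat.mod_two_eq_zero_or_one b with h2 | h2 <;>
    simp [h1, h2] at h ⊢ <;> omega

theorem mod_gap {n a b : ℕ} (hn : 0 < n) (h : a < b) (hm : a % n = b % n) : a + n ≤ b := by
  have h1 := Nat.div_add_mod a n
  have h2 := Nat.div_add_mod b n
  have h3 : a / n < b / n := by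
    by_contra h'
    have := Nat.mul_le_mul_left n (show b / n ≤ a / n by omega)
    omega
  have h4 := Nat.mul_le_mul_left n (show a / n + 1 ≤ b / n from h3)
  have h5 : n * (a / n + 1) = n * (a / n) + n := by ring
  omega

theorem mod_add_small {n a c : ℕ} (hn : 0 < n) (h : a % n + c < n) :
    (a + c) % n = a % n + c := by
  have h1 := Nat.div_add_mod a n
  have h2 : a + c = (a % n + c) + n * (a / n) := by omega
  rw [h2, Nat.add_mul_mod_self_left, Nat.mod_eq_of_lt h]

theorem optF_mem {N M : ℕ} (hN : 1 ≤ N) (hM : 1 ≤ M) {ε : ℝ} (hε : 0 ≤ ε)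
    (hsum : (N:ℝ) * (3*(M:ℝ)) * ε ≤ 1) :
    M ∈ {L | ∃ f : ℕ → ℕ,
      (∀ t, 1 ≤ t → t ≤ (ffInstance N M ε).length → 1 ≤ f t ∧ f t ≤ L) ∧
      ValidAssign (ffInstance N M ε) f} := by
  have hlen := ffInstance_length N M ε
  have h3M : 0 < 3*M := by omega
  refine ⟨optF M, fun t h1 h2 => ?_, ?_, ?_⟩
  · have := Nat.mod_lt (t-1) h3M
    unfold optF
    split <;> omega
  · -- sizes
    intro b
    have hsub : ∀ t ∈ (Finset.Icc 1 (ffInstance N M ε).length).filter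
        (fun t => optF M t = b), itemSize (ffInstance N M ε) t = ε := by
      intro t ht
      simp only [Finset.mem_filter, Finset.mem_Icc] at ht
      exact item_size hM ht.1.1 (hlen ▸ ht.1.2)
    rw [Finset.sum_congr rfl hsub, Finset.sum_const, nsmul_eq_mul]
    have hcard : ((Finset.Icc 1 (ffInstance N M ε).length).filter
        (fun t => optF M t = b)).card ≤ N * (3*M) := by
      calc _ ≤ (Finset.Icc 1 (ffInstance N M ε).length).card := Finset.card_filter_le _ _
        _ = N * (3*M) := by rw [Nat.card_Icc, hlen]; omega
    have : (((Finset.Icc 1 (ffInstance N M ε).length).filter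
        (fun t => optF M t = b)).card : ℝ) ≤ (N : ℝ) * (3*(M:ℝ)) := by
      calc _ ≤ ((N * (3*M) : ℕ) : ℝ) := by exact_mod_cast hcard
        _ = (N : ℝ) * (3*(M:ℝ)) := by push_cast; ring
    nlinarith
  · -- colors
    intro i j hi hij hj hfij hmid heq
    rw [hlen] at hj
    rw [item_color hM hi (by omega), item_color hM (by omega) hj] at heq
    set ri := (i-1) % (3*M) with hri
    set rj := (j-1) % (3*M) with hrj
    have hriv : ri < 3*M := Nat.mod_lt _ h3M
    have hrjv : rj < 3*M := Nat.mod_lt _ h3M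
    unfold optF at hfij hmid
    rw [← hri, ← hrj] at hfij
    by_cases h1 : ri < M <;> by_cases h2 : rj < M
    · -- both white
      rw [if_pos h1, if_pos h2] at hfij heq
      have hrr : ri = rj := by omega
      have hgap : (i-1) + 3*M ≤ j-1 := mod_gap h3M (by omega) (by rw [← hri, ← hrj, hrr])
      -- witness l = i + M + ri + 1 (0-based: (i-1) + (M + ri + 1))
      refine hmid (i + M + ri + 1) (by omega) (by omega) ?_
      have hl : (i + M + ri + 1 - 1) = (i-1) + (M + ri + 1) := by omega
      rw [hl, mod_add_small h3M (by omega)]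
      rw [if_neg (by omega)]
      have : (ri + (M + ri + 1) - M) / 2 = ri := by omega
      rw [this, ← hri, if_pos h1]
    · -- white vs alt: colors differ
      rw [if_pos h1, if_neg h2] at heq
      exact altC_ne_white _ heq.symm
    · rw [if_neg h1, if_pos h2] at heq
      exact altC_ne_white _ heq
    · -- both alternating
      rw [if_neg h1, if_neg h2] at hfij heq
      have hpar := altC_parity heq
      have hrr : ri = rj := by omega
      have hgap : (i-1) + 3*M ≤ j-1 := mod_gap h3M (by omega) (by rw [← hri, ← hrj, hrr])
      by_cases hpe : (ri - M) % 2 = 0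
      · -- red: witness l = i + 1
        refine hmid (i + 1) (by omega) (by omega) ?_
        have hl : (i + 1 - 1) = (i-1) + 1 := by omega
        rw [hl, mod_add_small h3M (by omega)]
        rw [if_neg (by omega)]
        have : (ri + 1 - M) / 2 = (ri - M) / 2 := by omega
        rw [this, ← hri, if_neg h1]
      · -- blue: witness with 0-based index (i-1) + (3*M - ri) + q, q = (ri-M)/2
        set q := (ri - M) / 2 with hq
        have hqM : q < M := by omega
        refine hmid (i + (3*M - ri) + q) (by omega) (by omega) ?_
        have h1' := Nat.div_add_mod (i-1) (3*M)
        have hl : (i + (3*M - ri) + q - 1) = q + ((i-1)/(3*M) + 1) * (3*M) := by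
          have e : ((i-1)/(3*M) + 1) * (3*M) = 3*M*((i-1)/(3*M)) + 3*M := by ring
          omega
        rw [hl, Nat.add_mul_mod_self_right, Nat.mod_eq_of_lt (by omega)]
        rw [if_pos hqM, ← hri, if_neg h1]

theorem opt_lower {N M : ℕ} (hN : 1 ≤ N) (hM : 1 ≤ M) {ε : ℝ} {L : ℕ}
    (hL : L ∈ {L | ∃ f : ℕ → ℕ,
      (∀ t, 1 ≤ t → t ≤ (ffInstance N M ε).length → 1 ≤ f t ∧ f t ≤ L) ∧
      ValidAssign (ffInstance N M ε) f}) : M ≤ L := by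
  obtain ⟨f, hb, hv⟩ := hL
  have hlen := ffInstance_length N M ε
  have hMlen : M ≤ N * (3*M) := by
    have := Nat.mul_le_mul_right (3*M) hN
    omega
  have key : ∀ d i j, 1 ≤ i → i < j → j ≤ M → j - i ≤ d → f i ≠ f j := by
    intro d
    induction d with
    | zero => intro i j h1 h2 h3 h4; omega
    | succ d ih =>
      intro i j h1 h2 h3 h4 hf
      have hcol := hv.2 i j h1 h2 (by omega) hf
        (fun l hl1 hl2 hfl => ih i l h1 hl1 (by omega) (by omega) (hfl ▸ rfl))
      rw [item_color hM h1 (by omega), item_color hM (by omega) (by omega)] at hcol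
      rw [Nat.mod_eq_of_lt (by omega), Nat.mod_eq_of_lt (by omega),
        if_pos (by omega), if_pos (by omega)] at hcol
      exact hcol rfl
  have hinj : Set.InjOn f (Finset.Icc 1 M) := by
    intro a ha b hb' hab
    simp only [Finset.coe_Icc, Set.mem_Icc] at ha hb'
    by_contra hne
    rcases Nat.lt_or_ge a b with h | h
    · exact key (b - a) a b ha.1 h hb'.2 le_rfl hab
    · exact key (a - b) b a hb'.1 (by omega) ha.2 le_rfl hab.symm
  have hmaps : ∀ t ∈ Finset.Icc 1 M, f t ∈ Finset.Icc 1 L := by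
    intro t ht
    simp only [Finset.mem_Icc] at ht ⊢
    exact hb t ht.1 (by omega)
  have := Finset.card_le_card_of_injOn f hmaps hinj
  simpa [Nat.card_Icc] using this

theorem opt_eq {N M : ℕ} (hN : 1 ≤ N) (hM : 1 ≤ M) {ε : ℝ} (hε : 0 ≤ ε)
    (hsum : (N:ℝ) * (3*(M:ℝ)) * ε ≤ 1) :
    OPTlist (ffInstance N M ε) = M :=
  le_antisymm (Nat.sInf_le (optF_mem hN hM hε hsum))
    (le_csInf ⟨M, optF_mem hN hM hε hsum⟩ fun _ hL => opt_lower hN hM hL)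

set_option maxHeartbeats 2000000 in
/-- for `M ≥ 4`, `N ≥ 2` and `ε = 1/(N²M²)`, the above instance has `OPT = M`,
while First Fit uses `M + (N−1)(M−1) = NM − N + 1` bins.  Consequently First Fit has an
unbounded asymptotic competitive ratio: for every `r` and `K` there is an instance with
`OPT ≥ K` on which First Fit uses at least `r·OPT` bins. -/
theorem firstFit_unbounded :
    (∀ N M : ℕ, 2 ≤ N → 4 ≤ M →
      OPTlist (ffInstance N M (1 / ((N : ℝ) ^ 2 * (M : ℝ) ^ 2))) = M ∧
      (ffRun (ffInstance N M (1 / ((N : ℝ) ^ 2 * (M : ℝ) ^ 2)))).length =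
        M + (N - 1) * (M - 1) ∧
      M + (N - 1) * (M - 1) = N * M - N + 1) ∧
    (∀ r : ℝ, ∀ K : ℕ, ∃ σ : List (ℝ × Color3),
      (∀ p ∈ σ, p.1 ∈ Set.Icc (0 : ℝ) 1) ∧
      K ≤ OPTlist σ ∧
      r * (OPTlist σ : ℝ) ≤ ((ffRun σ).length : ℝ)) := by
  have main : ∀ N M : ℕ, 2 ≤ N → 4 ≤ M →
      OPTlist (ffInstance N M (1 / ((N : ℝ) ^ 2 * (M : ℝ) ^ 2))) = M ∧
      (ffRun (ffInstance N M (1 / ((N : ℝ) ^ 2 * (M : ℝ) ^ 2)))).length =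
        M + (N - 1) * (M - 1) ∧
      M + (N - 1) * (M - 1) = N * M - N + 1 := by
    intro N M hN hM
    set ε := 1 / ((N : ℝ) ^ 2 * (M : ℝ) ^ 2) with hεdef
    have hx : (2:ℝ) ≤ (N:ℝ) := by exact_mod_cast hN
    have hy : (4:ℝ) ≤ (M:ℝ) := by exact_mod_cast hM
    have hpos : (0:ℝ) < (N : ℝ) ^ 2 * (M : ℝ) ^ 2 := by positivity
    have hε : 0 ≤ ε := by rw [hεdef]; positivity
    have hsum : (N:ℝ) * (3*(M:ℝ)) * ε ≤ 1 := by
      rw [hεdef, mul_one_div, div_le_one hpos]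
      have t0 : (0:ℝ) ≤ (N:ℝ)*(M:ℝ) := by positivity
      have h8 : (8:ℝ) ≤ (N:ℝ)*(M:ℝ) := by nlinarith
      nlinarith [mul_le_mul_of_nonneg_left h8 t0]
    refine ⟨opt_eq (by omega) (by omega) hε hsum, ?_, ?_⟩
    · obtain ⟨p, rfl⟩ : ∃ p, N = p + 1 := ⟨N - 1, by omega⟩
      have hp1 : (1:ℝ) ≤ (p:ℝ) := by
        have : (2:ℝ) ≤ (p:ℝ) + 1 := by push_cast at hx; linarith
        linarith
      have hcast : ((p:ℝ)+1) = ((p+1 : ℕ):ℝ) := by push_cast; ring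
      have hcond : ((p:ℝ)+1) * (2*(M:ℝ)+1) * ε ≤ 1 := by
        rw [hεdef, mul_one_div, div_le_one hpos, ← hcast]
        have k1 : 2*(M:ℝ)+1 ≤ (M:ℝ)^2 := by nlinarith
        have ha0 : (0:ℝ) ≤ (p:ℝ)+1 := by linarith
        have hint1 := mul_le_mul_of_nonneg_left k1 ha0
        have hint2 : ((p:ℝ)+1)*(M:ℝ)^2 ≤ ((p:ℝ)+1)^2*(M:ℝ)^2 := by
          have : (0:ℝ) ≤ (((p:ℝ)+1)^2 - ((p:ℝ)+1)) * (M:ℝ)^2 :=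
            mul_nonneg (by nlinarith) (sq_nonneg _)
          nlinarith
        nlinarith
      rw [ffRun, ffInstance_eq, ff_phases (by omega) hε p hcond]
      simp only [List.length_cons, List.length_replicate]
      have e : (p+1)*(M-1) = p*(M-1) + (M-1) := by ring
      simp only [Nat.add_sub_cancel]
      omega
    · obtain ⟨p, rfl⟩ : ∃ p, N = p + 1 := ⟨N - 1, by omega⟩
      obtain ⟨m, rfl⟩ : ∃ m, M = m + 1 := ⟨M - 1, by omega⟩
      have e1 : (p+1)*(m+1) = p*m + p + m + 1 := by ring
      have e2 : (p+1-1)*(m+1-1) = p*m := by simp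
      omega
  refine ⟨main, ?_⟩
  intro r K
  set c : ℕ := ⌈r⌉₊ with hc
  set N : ℕ := 2 * (c + 1) with hNdef
  set M : ℕ := max 4 K with hMdef
  have hN : 2 ≤ N := by omega
  have hM : 4 ≤ M := le_max_left _ _
  have hKM : K ≤ M := le_max_right _ _
  obtain ⟨hOPT, hFF, _⟩ := main N M hN hM
  set ε := 1 / ((N : ℝ) ^ 2 * (M : ℝ) ^ 2) with hεdef
  have hx : (2:ℝ) ≤ (N:ℝ) := by exact_mod_cast hN
  have hy : (4:ℝ) ≤ (M:ℝ) := by exact_mod_cast hM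
  have hpos : (0:ℝ) < (N : ℝ) ^ 2 * (M : ℝ) ^ 2 := by positivity
  have hε0 : 0 ≤ ε := by rw [hεdef]; positivity
  have hε1 : ε ≤ 1 := by
    rw [hεdef, div_le_one hpos]
    have h4 : (4:ℝ) ≤ (N:ℝ)^2 := by nlinarith
    have h16 : (16:ℝ) ≤ (M:ℝ)^2 := by nlinarith
    nlinarith
  have hrc : r ≤ (c:ℝ) := Nat.le_ceil r
  have hc0 : (0:ℝ) ≤ (c:ℝ) := by positivity
  have hNc : (N:ℝ) = 2*((c:ℝ)+1) := by rw [hNdef]; push_cast; ring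
  clear_value ε M N c
  refine ⟨ffInstance N M ε, ?_, ?_, ?_⟩
  · intro q hq
    rw [ffInstance_eq] at hq
    rw [List.mem_flatten] at hq
    obtain ⟨l, hl, hql⟩ := hq
    rw [List.mem_replicate] at hl
    rw [hl.2, Block, List.mem_append] at hql
    have hq1 : q.1 = ε := by
      rcases hql with h | h
      · rw [List.eq_of_mem_replicate h]
      · rw [List.mem_map] at h
        obtain ⟨j, _, hj⟩ := h
        rw [← hj]
    rw [hq1]
    exact ⟨hε0, hε1⟩
  · rw [hOPT]
    exact hKM
  · rw [hOPT, hFF]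
    have h1N : (1:ℕ) ≤ N := by omega
    have h1M : (1:ℕ) ≤ M := by omega
    have hcast : ((M + (N-1)*(M-1) : ℕ) : ℝ) = (M:ℝ) + ((N:ℝ)-1)*((M:ℝ)-1) := by
      rw [Nat.cast_add, Nat.cast_mul, Nat.cast_sub h1N, Nat.cast_sub h1M, Nat.cast_one]
    rw [hcast]
    have hM0 : (0:ℝ) ≤ (M:ℝ) := by linarith
    rw [hNc]
    rcases le_or_gt r 0 with hr | hr
    · have h1 : r * (M:ℝ) ≤ 0 := mul_nonpos_of_nonpos_of_nonneg hr hM0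
      have h2 : (0:ℝ) ≤ (2*((c:ℝ)+1)-1)*((M:ℝ)-1) := mul_nonneg (by linarith) (by linarith)
      linarith
    · nlinarith [mul_nonneg (sub_nonneg.2 hrc) hM0,
        mul_nonneg hc0 (show (0:ℝ) ≤ (M:ℝ) - 2 by linarith)]
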